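/- For positive semidefinite operators P, Q on C^n, the fidelity satisfies F(P,Q) = inf over positive definite Y of (1/2)⟨P,Y⟩ + (1/2)⟨Q,Y⁻¹⟩, where ⟨A,B⟩ = Tr(A*B). -/

import Mathlib

open Matrix Kronecker
open scoped ComplexOrder

/-- The old Mathlib `Matrix.PosSemidef.sqrt` (removed upstream), spelled out with its old definition. -/
noncomputable def Matrix.PosSemidef.psdSqrtOld {n : Type*} [Fintype n] [DecidableEq n]
    {A : Matrix n n ℂ} (hA : A.PosSemidef) : Matrix n n ℂ :=
  hA.1.eigenvectorUnitary.1 * diagonal ((↑) ∘ (√·) ∘ hA.1.eigenvalues) *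
    (star hA.1.eigenvectorUnitary : Matrix n n ℂ)

/-- Trace norm `‖A‖₁ = Tr √(Aᴴ A)` of a complex matrix. -/
noncomputable def traceNorm {α β : Type*} [Fintype α] [Fintype β] [DecidableEq α] [DecidableEq β]
    (A : Matrix α β ℂ) : ℝ :=
  ((Matrix.PosSemidef.psdSqrtOld (Matrix.posSemidef_conjTranspose_mul_self A)).trace).re

/-- Spectral norm (operator norm w.r.t. Euclidean norms). -/
noncomputable def specNorm {α β : Type*} [Fintype α] [Fintype β] [DecidableEq α] [DecidableEq β]
    (A : Matrix α β ℂ) : ℝ :=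
  ‖LinearMap.toContinuousLinearMap (Matrix.toEuclideanLin A)‖

/-- Frobenius norm. -/
noncomputable def frobNorm {α β : Type*} [Fintype α] [Fintype β]
    (A : Matrix α β ℂ) : ℝ :=
  Real.sqrt ((Aᴴ * A).trace.re)

/-- Positive semidefinite square root (junk value `0` off the PSD cone). -/
noncomputable def msqrt {α : Type*} [Fintype α] [DecidableEq α]
    (P : Matrix α α ℂ) : Matrix α α ℂ :=
  open scoped Classical in
  if h : P.PosSemidef then Matrix.PosSemidef.psdSqrtOld h else 0

/-- Fidelity `F(P,Q) = ‖√P √Q‖₁`. -/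
noncomputable def fid {α : Type*} [Fintype α] [DecidableEq α]
    (P Q : Matrix α α ℂ) : ℝ :=
  traceNorm (msqrt P * msqrt Q)

/-- Partial trace over the second (right) tensor factor. -/
noncomputable def ptraceRight {a b : ℕ} (M : Matrix (Fin a × Fin b) (Fin a × Fin b) ℂ) :
    Matrix (Fin a) (Fin a) ℂ :=
  Matrix.of fun i j => ∑ s : Fin b, M (i, s) (j, s)

/-- Partial trace over the first (left) tensor factor. -/
noncomputable def ptraceLeft {a b : ℕ} (M : Matrix (Fin a × Fin b) (Fin a × Fin b) ℂ) :
    Matrix (Fin b) (Fin b) ℂ :=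
  Matrix.of fun i j => ∑ s : Fin a, M (s, i) (s, j)

/-- `Φ ⊗ id` acting on `L(Cⁿ ⊗ Cᵏ)`. -/
noncomputable def tensorId {n m k : ℕ}
    (Φ : Matrix (Fin n) (Fin n) ℂ → Matrix (Fin m) (Fin m) ℂ)
    (M : Matrix (Fin n × Fin k) (Fin n × Fin k) ℂ) :
    Matrix (Fin m × Fin k) (Fin m × Fin k) ℂ :=
  Matrix.of fun p q => Φ (Matrix.of fun a c => M (a, p.2) (c, q.2)) p.1 q.1

/-- Completely bounded trace norm `¦¦¦Φ¦¦¦₁ = ‖Φ ⊗ id_{L(Cⁿ)}‖₁`. -/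
noncomputable def cbTraceNorm {n m : ℕ}
    (Φ : Matrix (Fin n) (Fin n) ℂ → Matrix (Fin m) (Fin m) ℂ) : ℝ :=
  sSup {c : ℝ | ∃ M : Matrix (Fin n × Fin n) (Fin n × Fin n) ℂ,
    traceNorm M ≤ 1 ∧ c = traceNorm (tensorId Φ M)}

/-- Completely bounded spectral norm of `Ψ : L(Cᵐ) → L(Cⁿ)`, with ancilla `Cⁿ`. -/
noncomputable def cbSpecNorm {m n : ℕ}
    (Ψ : Matrix (Fin m) (Fin m) ℂ → Matrix (Fin n) (Fin n) ℂ) : ℝ :=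
  sSup {c : ℝ | ∃ M : Matrix (Fin m × Fin n) (Fin m × Fin n) ℂ,
    specNorm M ≤ 1 ∧ c = specNorm (tensorId Ψ M)}

/-- Choi–Jamiołkowski representation `J(Φ) = ∑ᵢⱼ Φ(Eᵢⱼ) ⊗ Eᵢⱼ`. -/
noncomputable def choi {n m : ℕ}
    (Φ : Matrix (Fin n) (Fin n) ℂ → Matrix (Fin m) (Fin m) ℂ) :
    Matrix (Fin m × Fin n) (Fin m × Fin n) ℂ :=
  ∑ i : Fin n, ∑ j : Fin n, (Φ (Matrix.single i j 1)) ⊗ₖ (Matrix.single i j 1)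

/-- vec mapping. -/
def vecM {n : ℕ} (A : Matrix (Fin n) (Fin n) ℂ) : Fin n × Fin n → ℂ := fun p => A p.1 p.2

/-! Once `√P`, `√Q` and `‖·‖₁` are read through the continuous functional calculus,
`F(P,Q) = Tr |√P √Q|`. For positive definite `P, Q` both inequalities are explicit. Writing
`√P √Q = U |√P √Q|` with `U` unitary, expanding `(A - Y⁻¹ B)ᴴ Y (A - Y⁻¹ B) ≥ 0` for
`A = √P U`, `B = √Q` gives `2 F(P,Q) ≤ ⟨P,Y⟩ + ⟨Q,Y⁻¹⟩`; and `Y = √Q |√P √Q|⁻¹ √Q` makes both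
terms equal to `Tr |√P √Q|`. In general, replace `P, Q` by `P + δ, Q + δ`: the objective grows
by `δ (Tr Y + Tr Y⁻¹) / 2`, and the fidelity is continuous in `δ ≥ 0` since `CFC.sqrt` and
`CFC.abs` are continuous. -/

open Filter Topology
open scoped MatrixOrder Matrix.Norms.L2Operator

lemma Matrix.PosSemidef.posDef_add_smul_one {ι : Type*} [DecidableEq ι] {A : Matrix ι ι ℂ}
    (hA : A.PosSemidef) {δ : ℝ} (hδ : 0 < δ) : (A + (δ : ℂ) • 1).PosDef :=
  PosDef.posSemidef_add hA (PosDef.one.smul (by exact_mod_cast hδ))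

variable {ι : Type*} [Fintype ι] [DecidableEq ι]

namespace Matrix

lemma PosSemidef.psdSqrtOld_eq_cfcSqrt {A : Matrix ι ι ℂ} (hA : A.PosSemidef) :
    hA.psdSqrtOld = CFC.sqrt A := by
  rw [CFC.sqrt_eq_cfc, cfc_nnreal_eq_real _ A, hA.1.cfc_eq]
  simp only [PosSemidef.psdSqrtOld, IsHermitian.cfc, Unitary.conjStarAlgAut_apply]
  congr 3
  funext i
  simp [max_eq_left (hA.eigenvalues_nonneg i)]

lemma PosDef.two_mul_re_trace_conjTranspose_mul_le {κ : Type*} [Fintype κ] {Y : Matrix ι ι ℂ}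
    (hY : Y.PosDef) (A B : Matrix ι κ ℂ) :
    2 * (Aᴴ * B).trace.re ≤ (Aᴴ * Y * A).trace.re + (Bᴴ * Y⁻¹ * B).trace.re := by
  have hdet := (isUnit_iff_isUnit_det Y).mp hY.isUnit
  have hsq : (A - Y⁻¹ * B)ᴴ * Y * (A - Y⁻¹ * B) =
      Aᴴ * Y * A - Aᴴ * B - (Aᴴ * B)ᴴ + Bᴴ * Y⁻¹ * B := by
    simp only [conjTranspose_sub, conjTranspose_mul, conjTranspose_conjTranspose,
      hY.isHermitian.inv.eq, Matrix.sub_mul, Matrix.mul_sub, Matrix.mul_assoc,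
      Y.mul_nonsing_inv_cancel_left _ hdet, Y.nonsing_inv_mul_cancel_left _ hdet]
    abel
  have hnonneg := (hY.posSemidef.conjTranspose_mul_mul_same (A - Y⁻¹ * B)).trace_nonneg
  rw [hsq] at hnonneg
  have := (Complex.nonneg_iff.mp hnonneg).1
  simp only [trace_add, trace_sub, trace_conjTranspose, Complex.add_re, Complex.sub_re,
    Complex.star_def, Complex.conj_re] at this
  linarith

lemma exists_mem_unitary_eq_mul_cfcAbs {M : Matrix ι ι ℂ} (hM : IsUnit M) :
    ∃ U ∈ unitary (Matrix ι ι ℂ), M = U * CFC.abs M := by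
  have habs_sq : CFC.abs M * CFC.abs M = Mᴴ * M := CFC.abs_mul_abs M
  have habs : IsUnit (CFC.abs M) :=
    isUnit_of_mul_isUnit_left (habs_sq ▸ (hM.star.mul hM : IsUnit (Mᴴ * M)))
  have hdet := (isUnit_iff_isUnit_det _).mp habs
  have hself : (CFC.abs M)ᴴ = CFC.abs M := (CFC.abs_nonneg M).isSelfAdjoint
  refine ⟨M * (CFC.abs M)⁻¹, ?_, by rw [Matrix.mul_assoc, nonsing_inv_mul _ hdet, Matrix.mul_one]⟩
  rw [← unitaryGroup, mem_unitaryGroup_iff', star_eq_conjTranspose, conjTranspose_mul,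
    conjTranspose_nonsing_inv, hself]
  calc (CFC.abs M)⁻¹ * Mᴴ * (M * (CFC.abs M)⁻¹)
      = (CFC.abs M)⁻¹ * (CFC.abs M * CFC.abs M) * (CFC.abs M)⁻¹ := by
        simp only [habs_sq, Matrix.mul_assoc]
    _ = 1 := by
        simp only [← Matrix.mul_assoc, nonsing_inv_mul _ hdet, Matrix.one_mul,
          mul_nonsing_inv _ hdet]

end Matrix

lemma msqrt_eq_cfcSqrt (A : Matrix ι ι ℂ) : msqrt A = CFC.sqrt A := by
  by_cases hA : A.PosSemidef
  · rw [msqrt, dif_pos hA, hA.psdSqrtOld_eq_cfcSqrt]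
  · rw [msqrt, dif_neg hA, CFC.sqrt_of_not_nonneg (by rwa [nonneg_iff_posSemidef])]

lemma traceNorm_eq_re_trace_cfcAbs (M : Matrix ι ι ℂ) :
    traceNorm M = (CFC.abs M).trace.re := by
  rw [traceNorm, PosSemidef.psdSqrtOld_eq_cfcSqrt, CFC.abs, star_eq_conjTranspose]

lemma fid_eq_re_trace_cfcAbs (P Q : Matrix ι ι ℂ) :
    fid P Q = (CFC.abs (CFC.sqrt P * CFC.sqrt Q)).trace.re := by
  rw [fid, msqrt_eq_cfcSqrt, msqrt_eq_cfcSqrt, traceNorm_eq_re_trace_cfcAbs]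

lemma tendsto_fid_add_smul_one {P Q : Matrix ι ι ℂ} (hP : P.PosSemidef) (hQ : Q.PosSemidef) :
    Tendsto (fun δ : ℝ => fid (P + (δ : ℂ) • 1) (Q + (δ : ℂ) • 1)) (𝓝[>] 0) (𝓝 (fid P Q)) := by
  have hsqrt {A : Matrix ι ι ℂ} (hA : A.PosSemidef) :
      ContinuousOn (fun δ : ℝ => CFC.sqrt (A + (δ : ℂ) • 1)) (Set.Ici 0) :=
    CFC.continuousOn_sqrt.comp (by fun_prop) fun δ hδ =>
      (hA.add (PosSemidef.one.smul (by exact_mod_cast hδ))).nonneg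
  have hcont : ContinuousOn (fun δ : ℝ => fid (P + (δ : ℂ) • 1) (Q + (δ : ℂ) • 1)) (Set.Ici 0) := by
    simp_rw [fid_eq_re_trace_cfcAbs]
    exact (Complex.continuous_re.comp continuous_id.matrix_trace).comp_continuousOn
      (CFC.continuous_abs.comp_continuousOn ((hsqrt hP).mul (hsqrt hQ)))
  have h := (hcont.continuousWithinAt Set.self_mem_Ici).mono Set.Ioi_subset_Ici_self
  simpa only [Complex.ofReal_zero, zero_smul, add_zero] using h.tendsto

noncomputable def fidelityObjective (P Q Y : Matrix ι ι ℂ) : ℝ :=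
  (Pᴴ * Y).trace.re / 2 + (Qᴴ * Y⁻¹).trace.re / 2

lemma fidelityObjective_add_smul_one (P Q Y : Matrix ι ι ℂ) (δ : ℝ) :
    fidelityObjective (P + (δ : ℂ) • 1) (Q + (δ : ℂ) • 1) Y =
      fidelityObjective P Q Y + δ * (Y.trace.re + Y⁻¹.trace.re) / 2 := by
  simp only [fidelityObjective, conjTranspose_add, conjTranspose_smul, conjTranspose_one,
    Matrix.add_mul, Matrix.smul_mul, Matrix.one_mul, trace_add, trace_smul, Complex.star_def,
    Complex.conj_ofReal, smul_eq_mul, Complex.add_re, Complex.re_ofReal_mul]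
  ring

lemma fidelityObjective_le_add_smul_one {Y : Matrix ι ι ℂ} (hY : Y.PosDef) (P Q : Matrix ι ι ℂ)
    {δ : ℝ} (hδ : 0 ≤ δ) :
    fidelityObjective P Q Y ≤ fidelityObjective (P + (δ : ℂ) • 1) (Q + (δ : ℂ) • 1) Y := by
  have h := (Complex.nonneg_iff.mp hY.posSemidef.trace_nonneg).1
  have h' := (Complex.nonneg_iff.mp hY.inv.posSemidef.trace_nonneg).1
  rw [fidelityObjective_add_smul_one]
  have : 0 ≤ δ * (Y.trace.re + Y⁻¹.trace.re) := by positivity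
  linarith

lemma fid_le_fidelityObjective_of_posDef {P Q Y : Matrix ι ι ℂ} (hP : P.PosDef)
    (hQ : Q.PosDef) (hY : Y.PosDef) : fid P Q ≤ fidelityObjective P Q Y := by
  set A := CFC.sqrt P
  set B := CFC.sqrt Q
  have hA : Aᴴ = A := (CFC.sqrt_nonneg P).isSelfAdjoint
  have hB : Bᴴ = B := (CFC.sqrt_nonneg Q).isSelfAdjoint
  have hAB : IsUnit (A * B) :=
    hP.isStrictlyPositive.isUnit_cfcSqrt.mul hQ.isStrictlyPositive.isUnit_cfcSqrt
  obtain ⟨U, hU, hpolar⟩ := exists_mem_unitary_eq_mul_cfcAbs hAB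
  have habs : (A * U)ᴴ * B = CFC.abs (A * B) :=
    calc (A * U)ᴴ * B = star U * (A * B) := by
          rw [conjTranspose_mul, hA, star_eq_conjTranspose, Matrix.mul_assoc]
      _ = star U * (U * CFC.abs (A * B)) := congrArg _ hpolar
      _ = CFC.abs (A * B) := by
          rw [← Matrix.mul_assoc, Unitary.star_mul_self_of_mem hU, Matrix.one_mul]
  have hPY : ((A * U)ᴴ * Y * (A * U)).trace = (Pᴴ * Y).trace :=
    calc ((A * U)ᴴ * Y * (A * U)).trace = (A * Y * A * (U * star U)).trace := by
          rw [conjTranspose_mul, hA, star_eq_conjTranspose, Matrix.mul_assoc, Matrix.mul_assoc,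
            trace_mul_comm]
          simp only [Matrix.mul_assoc]
      _ = (A * A * Y).trace := by
          rw [Unitary.mul_star_self_of_mem hU, Matrix.mul_one, trace_mul_comm, Matrix.mul_assoc]
      _ = (Pᴴ * Y).trace := by
          rw [CFC.sqrt_mul_sqrt_self P hP.posSemidef.nonneg, hP.isHermitian.eq]
  have hQY : (Bᴴ * Y⁻¹ * B).trace = (Qᴴ * Y⁻¹).trace := by
    rw [hB, trace_mul_comm, ← Matrix.mul_assoc, CFC.sqrt_mul_sqrt_self Q hQ.posSemidef.nonneg,
      hQ.isHermitian.eq]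
  have key := hY.two_mul_re_trace_conjTranspose_mul_le (A * U) B
  rw [habs, hPY, hQY] at key
  rw [fid_eq_re_trace_cfcAbs, fidelityObjective]
  linarith

lemma exists_fidelityObjective_eq_fid {P Q : Matrix ι ι ℂ} (hP : P.PosDef) (hQ : Q.PosDef) :
    ∃ Y : Matrix ι ι ℂ, Y.PosDef ∧ fidelityObjective P Q Y = fid P Q := by
  set A := CFC.sqrt P
  set B := CFC.sqrt Q
  set S := CFC.abs (A * B)
  have hA : Aᴴ = A := (CFC.sqrt_nonneg P).isSelfAdjoint
  have hB : Bᴴ = B := (CFC.sqrt_nonneg Q).isSelfAdjoint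
  have hBB : B * B = Q := CFC.sqrt_mul_sqrt_self Q hQ.posSemidef.nonneg
  have hBunit : IsUnit B := hQ.isStrictlyPositive.isUnit_cfcSqrt
  have hSS : S * S = B * P * B := by
    rw [CFC.abs_mul_abs, star_eq_conjTranspose, conjTranspose_mul, hA, hB, Matrix.mul_assoc,
      ← Matrix.mul_assoc A, CFC.sqrt_mul_sqrt_self P hP.posSemidef.nonneg, Matrix.mul_assoc]
  have hSunit : IsUnit S := isUnit_of_mul_isUnit_left <| hSS ▸
    (hBunit.mul hP.isUnit).mul hBunit
  have hS : S.PosDef := ((CFC.abs_nonneg _).posSemidef.posDef_iff_isUnit).mpr hSunit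
  have hBdet := (isUnit_iff_isUnit_det B).mp hBunit
  have hSdet := (isUnit_iff_isUnit_det S).mp hSunit
  refine ⟨B * S⁻¹ * B, ?_, ?_⟩
  · simpa only [hB] using hS.inv.conjTranspose_mul_mul_same (mulVec_injective_of_isUnit hBunit)
  have hPY : (Pᴴ * (B * S⁻¹ * B)).trace = S.trace :=
    calc (Pᴴ * (B * S⁻¹ * B)).trace = (S * S * S⁻¹).trace := by
          rw [hSS, hP.isHermitian.eq, ← Matrix.mul_assoc, trace_mul_comm, ← Matrix.mul_assoc,
            ← Matrix.mul_assoc]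
      _ = S.trace := by rw [Matrix.mul_assoc, mul_nonsing_inv _ hSdet, Matrix.mul_one]
  have hQY : (Qᴴ * (B * S⁻¹ * B)⁻¹).trace = S.trace :=
    calc (Qᴴ * (B * S⁻¹ * B)⁻¹).trace = (B * (S * B⁻¹)).trace := by
          rw [Matrix.mul_inv_rev, Matrix.mul_inv_rev, nonsing_inv_nonsing_inv _ hSdet,
            hQ.isHermitian.eq, ← hBB]
          simp only [Matrix.mul_assoc, B.mul_nonsing_inv_cancel_left _ hBdet]
      _ = S.trace := by rw [trace_mul_comm, B.nonsing_inv_mul_cancel_right _ hBdet]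
  rw [fidelityObjective, hPY, hQY, fid_eq_re_trace_cfcAbs]
  ring

lemma fid_le_fidelityObjective {P Q Y : Matrix ι ι ℂ} (hP : P.PosSemidef) (hQ : Q.PosSemidef)
    (hY : Y.PosDef) : fid P Q ≤ fidelityObjective P Q Y := by
  refine le_of_tendsto_of_tendsto (tendsto_fid_add_smul_one hP hQ) ?_
    (eventually_nhdsWithin_of_forall fun δ hδ =>
      (fid_le_fidelityObjective_of_posDef (hP.posDef_add_smul_one hδ)
        (hQ.posDef_add_smul_one hδ) hY).trans_eq (fidelityObjective_add_smul_one P Q Y δ))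
  exact tendsto_nhdsWithin_of_tendsto_nhds <| Continuous.tendsto' (by fun_prop) 0 _ (by simp)

/-- SDP dual characterization of fidelity. -/
theorem stmt2 {n : ℕ} (P Q : Matrix (Fin n) (Fin n) ℂ)
    (hP : P.PosSemidef) (hQ : Q.PosSemidef) :
    fid P Q = sInf {c : ℝ | ∃ Y : Matrix (Fin n) (Fin n) ℂ, Y.PosDef ∧
      c = ((Pᴴ * Y).trace).re / 2 + ((Qᴴ * Y⁻¹).trace).re / 2} := by
  set S := {c : ℝ | ∃ Y : Matrix (Fin n) (Fin n) ℂ, Y.PosDef ∧ c = fidelityObjective P Q Y}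
  have hS : fid P Q ∈ lowerBounds S := by
    rintro _ ⟨Y, hY, rfl⟩
    exact fid_le_fidelityObjective hP hQ hY
  refine le_antisymm (le_csInf ⟨_, 1, PosDef.one, rfl⟩ hS)
    (ge_of_tendsto (tendsto_fid_add_smul_one hP hQ) (eventually_nhdsWithin_of_forall ?_))
  intro δ hδ
  obtain ⟨Y, hY, hYopt⟩ :=
    exists_fidelityObjective_eq_fid (hP.posDef_add_smul_one hδ) (hQ.posDef_add_smul_one hδ)
  calc sInf S ≤ fidelityObjective P Q Y := csInf_le ⟨_, hS⟩ ⟨Y, hY, rfl⟩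
    _ ≤ _ := fidelityObjective_le_add_smul_one hY P Q (le_of_lt hδ)
    _ = _ := hYopt
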